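/- arXiv:2010.08766 — 6 statements merged into one kernel-verified Lean document; each statement's English description precedes it below -/
import Mathlib

section
/- Let q1 = ((((κ−1)/n)+1)^{1/2} − 1)/((((κ−1)/n)+1)^{1/2} + 1) and x* ∈ ℝ^d be the vector whose ((i−1)p+j)-th coordinate equals q1^j for every i = 1,…,n and j = 1,…,p. Then x* is a global minimizer of F, i.e. F(x*) ≤ F(y) for all y ∈ ℝ^d (equivalently, ∇F(x*) = 0). -/
open Finset

/-- The `p × p` tridiagonal matrix with diagonal entries `2` except the last one, which is `ξ`,
and `-1` on the sub- and super-diagonal. -/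
noncomputable def Tmat (p : ℕ) (ξ : ℝ) : Matrix (Fin p) (Fin p) ℝ :=
  fun j k =>
    if j = k then (if (j : ℕ) = p - 1 then ξ else 2)
    else if (j : ℕ) + 1 = (k : ℕ) ∨ (k : ℕ) + 1 = (j : ℕ) then -1 else 0

/-- The `d × d` matrix (`d = np`, coordinates indexed by `Fin n × Fin p`) which is zero outside
the `i`-th diagonal `p × p` block, and whose `i`-th diagonal block is `Tmat p ξ`. -/
noncomputable def Amat (n p : ℕ) (ξ : ℝ) (i : Fin n) :
    Matrix (Fin n × Fin p) (Fin n × Fin p) ℝ :=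
  fun a b => if a.1 = i ∧ b.1 = i then Tmat p ξ a.2 b.2 else 0

/-- The component function
`f_i(x) = ((L−μ)/4) ((1/2)⟨x, A_i x⟩ − ⟨e_{(i−1)p+1}, x⟩) + (μ/2)‖x‖²`. -/
noncomputable def fComp1 (n p : ℕ) [NeZero p] (L μ ξ : ℝ) (i : Fin n)
    (x : EuclideanSpace ℝ (Fin n × Fin p)) : ℝ :=
  ((L - μ) / 4) *
      ((1 / 2) * (∑ a : Fin n × Fin p, ∑ b : Fin n × Fin p, x a * Amat n p ξ i a b * x b)
        - x (i, 0)) +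
    (μ / 2) * ‖x‖ ^ 2

/-! `F` is the sum over the `n` blocks of one quadratic `½ wᵀ(cT + μI)w − c w₀` with
`c = (L − μ)/(4n)` and `T = Tmat p ξ`. Since
`wᵀTw = w₀² + Σ (w_j − w_{j+1})² + (ξ − 1) w_{p−1}²` and `ξ ≥ 1`, this quadratic is convex, so
it is minimised at any solution of `(cT + μI)w = c e₀`. The geometric vector `w_j = q1^(j+1)` is
one: with `s = √((κ − 1)/n + 1)`, `q1 = (s − 1)/(s + 1)` is the root in `[0, 1)` of the
characteristic equation `c q² − (2c + μ) q + c = 0` of the interior rows, and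
`ξ = (s + 3)/(s + 1)` is exactly the value for which the last row holds as well. -/

open Matrix Finset

noncomputable def quadraticObjective {ι : Type*} [Fintype ι] (M : Matrix ι ι ℝ) (b w : ι → ℝ) :
    ℝ :=
  1 / 2 * (w ⬝ᵥ M *ᵥ w) - b ⬝ᵥ w

namespace Matrix

theorem PosSemidef.quadraticObjective_le {ι : Type*} [Fintype ι] {M : Matrix ι ι ℝ}
    (hM : M.PosSemidef) {x b : ι → ℝ} (hx : M *ᵥ x = b) (y : ι → ℝ) :
    quadraticObjective M b x ≤ quadraticObjective M b y := by
  have hsymm : ∀ u v : ι → ℝ, u ⬝ᵥ M *ᵥ v = v ⬝ᵥ M *ᵥ u := fun u v => by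
    rw [dotProduct_mulVec, dotProduct_comm, ← mulVec_transpose,
      ← conjTranspose_eq_transpose_of_trivial, hM.isHermitian.eq]
  have hz := hM.dotProduct_mulVec_nonneg (y - x)
  rw [star_trivial] at hz
  have hexp : (y - x) ⬝ᵥ M *ᵥ (y - x) = y ⬝ᵥ M *ᵥ y - 2 * (y ⬝ᵥ b) + x ⬝ᵥ M *ᵥ x := by
    rw [mulVec_sub, sub_dotProduct, dotProduct_sub, dotProduct_sub, hsymm x y, hx]
    ring
  have hxx : x ⬝ᵥ M *ᵥ x = b ⬝ᵥ x := by rw [hx, dotProduct_comm]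
  rw [dotProduct_comm y b] at hexp
  unfold quadraticObjective
  linarith

end Matrix

theorem sum_range_mul_two_sub_neighbours (v : ℕ → ℝ) (m : ℕ) :
    ∑ j ∈ range m, v j * (2 * v j - v (j + 1) - (if 0 < j then v (j - 1) else 0)) =
      v 0 ^ 2 + ∑ j ∈ range m, (v j - v (j + 1)) ^ 2 - v m ^ 2
        + (if 0 < m then v m * v (m - 1) else 0) := by
  induction m with
  | zero => simp
  | succ m ih =>
    rw [sum_range_succ, ih, sum_range_succ]
    simp only [Nat.succ_pos, if_true, Nat.add_sub_cancel]
    split_ifs <;> ring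

section Tridiagonal

variable (m : ℕ) (ξ : ℝ)

theorem Tmat_mulVec (v : ℕ → ℝ) (j : Fin (m + 1)) :
    (Tmat (m + 1) ξ *ᵥ fun k => v k) j =
      (if (j : ℕ) = m then ξ else 2) * v j - (if (j : ℕ) < m then v (j + 1) else 0)
        - (if 0 < (j : ℕ) then v (j - 1) else 0) := by
  have hentry : ∀ k : ℕ, (if (j : ℕ) = k then (if (j : ℕ) = m then ξ else 2)
        else if (j : ℕ) + 1 = k ∨ k + 1 = (j : ℕ) then (-1 : ℝ) else 0) * v k =
      (if (j : ℕ) = k then (if (j : ℕ) = m then ξ else 2) * v k else 0)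
        - (if (j : ℕ) + 1 = k then v k else 0)
        - (if (j : ℕ) - 1 = k then (if 0 < (j : ℕ) then v k else 0) else 0) := by
    intro k
    split_ifs <;> first | omega | ring
  have hT : ∀ k : Fin (m + 1), Tmat (m + 1) ξ j k =
      if (j : ℕ) = k then (if (j : ℕ) = m then ξ else 2)
      else if (j : ℕ) + 1 = k ∨ (k : ℕ) + 1 = j then (-1 : ℝ) else 0 := fun k => by
    simp [Tmat, Fin.ext_iff]
  simp only [mulVec, dotProduct, hT]
  rw [Fin.sum_univ_eq_sum_range (fun k => (if (j : ℕ) = k then (if (j : ℕ) = m then ξ else 2)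
        else if (j : ℕ) + 1 = k ∨ k + 1 = (j : ℕ) then (-1 : ℝ) else 0) * v k)]
  simp only [hentry, sum_sub_distrib, sum_ite_eq, mem_range]
  have hj := j.isLt
  split_ifs <;> first | rfl | omega

theorem Tmat_isHermitian : (Tmat (m + 1) ξ).IsHermitian := by
  ext j k
  simp only [conjTranspose_apply, star_trivial, Tmat, Fin.ext_iff]
  split_ifs <;> first | rfl | omega

theorem dotProduct_Tmat_mulVec (v : ℕ → ℝ) :
    (fun k : Fin (m + 1) => v k) ⬝ᵥ Tmat (m + 1) ξ *ᵥ (fun k => v k) =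
      v 0 ^ 2 + ∑ j ∈ range m, (v j - v (j + 1)) ^ 2 + (ξ - 1) * v m ^ 2 := by
  simp only [dotProduct, Tmat_mulVec]
  rw [Fin.sum_univ_eq_sum_range (fun j => v j * ((if j = m then ξ else 2) * v j
    - (if j < m then v (j + 1) else 0) - (if 0 < j then v (j - 1) else 0))), sum_range_succ]
  have hinterior : ∑ j ∈ range m, v j * ((if j = m then ξ else 2) * v j
      - (if j < m then v (j + 1) else 0) - (if 0 < j then v (j - 1) else 0)) =
      ∑ j ∈ range m, v j * (2 * v j - v (j + 1) - (if 0 < j then v (j - 1) else 0)) :=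
    sum_congr rfl fun j hj => by
      rw [mem_range] at hj
      rw [if_neg hj.ne, if_pos hj]
  rw [hinterior, sum_range_mul_two_sub_neighbours, if_pos rfl, if_neg (lt_irrefl m)]
  split_ifs <;> ring

theorem Tmat_posSemidef (hξ : 1 ≤ ξ) : (Tmat (m + 1) ξ).PosSemidef := by
  refine .of_dotProduct_mulVec_nonneg (Tmat_isHermitian m ξ) fun w => ?_
  obtain ⟨v, rfl⟩ : ∃ v : ℕ → ℝ, w = fun k : Fin (m + 1) => v k :=
    ⟨fun i => w (Fin.ofNat (m + 1) i), funext fun k => by simp⟩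
  rw [star_trivial, dotProduct_Tmat_mulVec]
  have hξ' : 0 ≤ ξ - 1 := sub_nonneg.2 hξ
  positivity

theorem smul_Tmat_add_smul_one_mulVec_pow {c μ q : ℝ} (h₁ : (2 * c + μ) * q = c * (1 + q ^ 2))
    (h₂ : (c * ξ + μ) * q = c) :
    (c • Tmat (m + 1) ξ + μ • (1 : Matrix (Fin (m + 1)) (Fin (m + 1)) ℝ)) *ᵥ
      (fun k : Fin (m + 1) => q ^ ((k : ℕ) + 1)) = Pi.single 0 c := by
  ext j
  have hT := Tmat_mulVec m ξ (fun k => q ^ (k + 1)) j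
  rw [add_mulVec, smul_mulVec, smul_mulVec, one_mulVec, Pi.add_apply, Pi.smul_apply,
    Pi.smul_apply, hT, smul_eq_mul, smul_eq_mul]
  simp only [Pi.single_apply, Fin.ext_iff, Fin.val_zero]
  have hj := j.isLt
  generalize (j : ℕ) = i at hj ⊢
  rcases i with _ | i
  · split_ifs <;> first | omega | linear_combination h₁ | linear_combination h₂
  · rw [Nat.add_sub_cancel]
    split_ifs <;>
      first
      | omega
      | contradiction
      | linear_combination q ^ (i + 1) * h₁
      | linear_combination q ^ (i + 1) * h₂

end Tridiagonal

section Blocks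

variable {n p : ℕ}

theorem sum_mul_Amat_mul (ξ : ℝ) (i : Fin n) (x : Fin n × Fin p → ℝ) :
    ∑ a, ∑ b, x a * Amat n p ξ i a b * x b =
      (fun j => x (i, j)) ⬝ᵥ Tmat p ξ *ᵥ fun j => x (i, j) := by
  simp only [Amat, dotProduct, mulVec, Fintype.sum_prod_type, mul_ite, mul_zero, ite_mul,
    zero_mul, ite_and, sum_ite_irrel, sum_const_zero, sum_ite_eq', mem_univ, if_true, mul_sum,
    mul_assoc]

theorem EuclideanSpace.norm_sq_eq_sum_blocks (x : EuclideanSpace ℝ (Fin n × Fin p)) :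
    ‖x‖ ^ 2 = ∑ i, (fun j => x (i, j)) ⬝ᵥ fun j => x (i, j) := by
  rw [EuclideanSpace.real_norm_sq_eq, Fintype.sum_prod_type]
  simp only [dotProduct, sq]

theorem mean_fComp1_eq_sum_quadraticObjective [NeZero p] (hn : n ≠ 0) (L μ ξ : ℝ)
    (x : EuclideanSpace ℝ (Fin n × Fin p)) :
    (1 / (n : ℝ)) * ∑ i, fComp1 n p L μ ξ i x =
      ∑ i, quadraticObjective (((L - μ) / (4 * n)) • Tmat p ξ + μ • 1)
        (Pi.single 0 ((L - μ) / (4 * n))) (fun j => x (i, j)) := by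
  simp only [fComp1, quadraticObjective, sum_mul_Amat_mul, EuclideanSpace.norm_sq_eq_sum_blocks,
    add_mulVec, smul_mulVec, one_mulVec, dotProduct_add, dotProduct_smul, smul_eq_mul,
    single_dotProduct]
  rw [sum_add_distrib, sum_const, card_univ, Fintype.card_fin, nsmul_eq_mul, mul_add, mul_sum,
    ← mul_assoc, one_div_mul_cancel (Nat.cast_ne_zero.2 hn), one_mul, mul_sum, ← sum_add_distrib]
  refine sum_congr rfl fun i _ => ?_
  field_simp
  ring

end Blocks

section Parameters

variable {c μ s : ℝ}

theorem ratio_char_eq (hs : 0 ≤ s) (h : μ * (s ^ 2 - 1) = 4 * c) :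
    (2 * c + μ) * ((s - 1) / (s + 1)) = c * (1 + ((s - 1) / (s + 1)) ^ 2) := by
  have : s + 1 ≠ 0 := by positivity
  field_simp
  linear_combination h

theorem ratio_boundary_eq (hs : 0 ≤ s) (h : μ * (s ^ 2 - 1) = 4 * c) :
    (c * ((s + 3) / (s + 1)) + μ) * ((s - 1) / (s + 1)) = c := by
  have : s + 1 ≠ 0 := by positivity
  field_simp
  linear_combination h

end Parameters

theorem stmt0_general (n p : ℕ) (hn : 2 ≤ n) [NeZero p]
    (L μ κ ξ q1 : ℝ) (hμ : 0 < μ) (hLμ : μ < L) (hκ : κ = L / μ)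
    (hξ : ξ = (Real.sqrt ((κ - 1) / n + 1) + 3) / (Real.sqrt ((κ - 1) / n + 1) + 1))
    (hq1 : q1 = (Real.sqrt ((κ - 1) / n + 1) - 1) / (Real.sqrt ((κ - 1) / n + 1) + 1))
    (F : EuclideanSpace ℝ (Fin n × Fin p) → ℝ)
    (hF : F = fun x => (1 / (n : ℝ)) * ∑ i : Fin n, fComp1 n p L μ ξ i x)
    (xstar : EuclideanSpace ℝ (Fin n × Fin p))
    (hxstar : ∀ (i : Fin n) (j : Fin p), xstar (i, j) = q1 ^ ((j : ℕ) + 1)) :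
    ∀ y : EuclideanSpace ℝ (Fin n × Fin p), F xstar ≤ F y := by
  obtain ⟨m, rfl⟩ := Nat.exists_eq_add_one_of_ne_zero (NeZero.ne p)
  have hn0 : n ≠ 0 := by omega
  set s := Real.sqrt ((κ - 1) / n + 1)
  have hs : 0 ≤ s := Real.sqrt_nonneg _
  have hsc : μ * (s ^ 2 - 1) = 4 * ((L - μ) / (4 * n)) := by
    have : 0 ≤ (κ - 1) / n := div_nonneg (by rw [hκ, sub_nonneg, one_le_div hμ]; exact hLμ.le)
      (Nat.cast_nonneg n)
    rw [Real.sq_sqrt (by linarith), hκ]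
    field_simp
    ring
  set c := (L - μ) / (4 * n)
  have hc : 0 ≤ c := div_nonneg (sub_nonneg.2 hLμ.le) (by positivity)
  have hξ1 : 1 ≤ ξ := by rw [hξ, one_le_div (by positivity)]; linarith
  have hM : (c • Tmat (m + 1) ξ + μ • 1).PosSemidef :=
    ((Tmat_posSemidef m ξ hξ1).smul hc).add (PosSemidef.one.smul hμ.le)
  have hcrit := smul_Tmat_add_smul_one_mulVec_pow m ξ (hq1 ▸ ratio_char_eq hs hsc)
    (hq1 ▸ hξ ▸ ratio_boundary_eq hs hsc)
  intro y
  simp only [hF, mean_fComp1_eq_sum_quadraticObjective hn0]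
  refine sum_le_sum fun i _ => ?_
  have hblock : (fun j => xstar (i, j)) = fun k : Fin (m + 1) => q1 ^ ((k : ℕ) + 1) :=
    funext (hxstar i)
  rw [hblock]
  exact hM.quadraticObjective_le hcrit _

/-- The vector `x*` whose `((i−1)p+j)`-th coordinate is `q1^j` is a global minimizer of
`F = (1/n) ∑ f_i` for the hard instance of Case (1). -/
theorem stmt0 (n p : ℕ) (hn : 2 ≤ n) [NeZero p] (hp : 1 ≤ p)
    (L μ κ ξ q1 : ℝ) (hμ : 0 < μ) (hLμ : μ < L) (hκ : κ = L / μ)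
    (hξ : ξ = (Real.sqrt ((κ - 1) / n + 1) + 3) / (Real.sqrt ((κ - 1) / n + 1) + 1))
    (hq1 : q1 = (Real.sqrt ((κ - 1) / n + 1) - 1) / (Real.sqrt ((κ - 1) / n + 1) + 1))
    (F : EuclideanSpace ℝ (Fin n × Fin p) → ℝ)
    (hF : F = fun x => (1 / (n : ℝ)) * ∑ i : Fin n, fComp1 n p L μ ξ i x)
    (xstar : EuclideanSpace ℝ (Fin n × Fin p))
    (hxstar : ∀ (i : Fin n) (j : Fin p), xstar (i, j) = q1 ^ ((j : ℕ) + 1)) :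
    ∀ y : EuclideanSpace ℝ (Fin n × Fin p), F xstar ≤ F y :=
  stmt0_general n p hn L μ κ ξ q1 hμ hLμ hκ hξ hq1 F hF xstar hxstar
end

section
/- Let κ > 1 be real, n ≥ 2 an integer, and q1 = ((((κ−1)/n)+1)^{1/2} − 1)/((((κ−1)/n)+1)^{1/2} + 1). If κ ≥ (7/2)·n, then 1/log(1/q1) ≥ (1/(2√14))·√(κ/n) + 1/4. -/
set_option maxHeartbeats 1000000

/-- Key analytic inequality: `log x ≤ (x-1)/√x` for `x ≥ 1`. -/
lemma log_le_sub_one_div_sqrt {x : ℝ} (hx : 1 ≤ x) :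
    Real.log x ≤ (x - 1) / Real.sqrt x := by
  have hx0 : 0 < x := lt_of_lt_of_le one_pos hx
  set u : ℝ := Real.log x with hu
  have hu0 : 0 ≤ u := Real.log_nonneg hx
  have hex : Real.exp u = x := Real.exp_log hx0
  have hsq : Real.sqrt x = Real.exp (u / 2) := by
    rw [show x = (Real.exp (u / 2)) ^ 2 by
      rw [sq, ← Real.exp_add]; rw [show u / 2 + u / 2 = u by ring, hex]]
    exact Real.sqrt_sq (Real.exp_pos _).le
  have hsinh : u / 2 ≤ Real.sinh (u / 2) := by
    rw [Real.self_le_sinh_iff]; linarith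
  rw [Real.sinh_eq] at hsinh
  have hpos : (0:ℝ) < Real.exp (u / 2) := Real.exp_pos _
  rw [hsq, le_div_iff₀ hpos]
  have h1 : Real.exp (u/2) * Real.exp (u/2) = x := by
    rw [← Real.exp_add, show u/2 + u/2 = u by ring, hex]
  have h2 : Real.exp (-(u/2)) * Real.exp (u/2) = 1 := by
    rw [← Real.exp_add]; simp
  nlinarith [hsinh, hpos]

/-- If `κ ≥ (7/2) n` then `1/log(1/q1) ≥ (1/(2√14))√(κ/n) + 1/4`, where
`q1 = (√((κ−1)/n + 1) − 1)/(√((κ−1)/n + 1) + 1)`. -/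
theorem stmt1 (κ : ℝ) (hκ : 1 < κ) (n : ℕ) (hn : 2 ≤ n)
    (q1 : ℝ)
    (hq1 : q1 = (Real.sqrt ((κ - 1) / n + 1) - 1) / (Real.sqrt ((κ - 1) / n + 1) + 1))
    (h : (7 / 2 : ℝ) * n ≤ κ) :
    1 / Real.log (1 / q1) ≥ (1 / (2 * Real.sqrt 14)) * Real.sqrt (κ / n) + 1 / 4 := by
  have hn2 : (2:ℝ) ≤ (n:ℝ) := by exact_mod_cast hn
  have hn0 : (0:ℝ) < (n:ℝ) := by linarith
  set A : ℝ := (κ - 1) / (n:ℝ) + 1 with hAdef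
  have hA4 : 4 ≤ A := by
    have h3 : 3 ≤ (κ - 1) / (n:ℝ) := by
      rw [le_div_iff₀ hn0]; nlinarith
    rw [hAdef]; linarith
  set s : ℝ := Real.sqrt A with hsdef
  clear_value s
  have hs2 : 2 ≤ s := by
    have : Real.sqrt 4 ≤ s := hsdef ▸ Real.sqrt_le_sqrt hA4
    rwa [show (4:ℝ) = 2^2 by norm_num, Real.sqrt_sq (by norm_num : (0:ℝ) ≤ 2)] at this
  have hsA : s ^ 2 = A := hsdef ▸ Real.sq_sqrt (by linarith : (0:ℝ) ≤ A)
  -- q1 ∈ (0,1)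
  have hq1pos : 0 < q1 := by
    rw [hq1]; exact div_pos (by linarith) (by linarith)
  have hq1lt : q1 < 1 := by
    rw [hq1, div_lt_one (by linarith)]; linarith
  -- log(1/q1) > 0
  have hlogpos : 0 < Real.log (1 / q1) := by
    apply Real.log_pos
    rw [lt_div_iff₀ hq1pos]; linarith
  -- log(1/q1) ≤ 2/√((κ-1)/n)
  have hx1 : (1:ℝ) ≤ (s+1)/(s-1) := by
    rw [le_div_iff₀ (by linarith)]; linarith
  have hinvq : 1 / q1 = (s+1)/(s-1) := by
    rw [hq1]
    rw [one_div_div]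
  have hkey : Real.log (1 / q1) ≤ 2 / Real.sqrt ((κ - 1) / n) := by
    rw [hinvq]
    have := log_le_sub_one_div_sqrt hx1
    have hs1ne : s - 1 ≠ 0 := by linarith
    have hxm : (s+1)/(s-1) - 1 = 2/(s-1) := by
      field_simp
      norm_num
    have hsqx : Real.sqrt ((s+1)/(s-1)) = Real.sqrt (s+1) / Real.sqrt (s-1) :=
      Real.sqrt_div (by linarith) _
    have hAm1 : (κ - 1) / (n:ℝ) = (s-1)*(s+1) := by
      have e : (s-1)*(s+1) = s^2 - 1 := by ring
      rw [e, hsA, hAdef]; ring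
    have hsqprod : Real.sqrt ((κ-1)/n) = Real.sqrt (s-1) * Real.sqrt (s+1) := by
      rw [hAm1, Real.sqrt_mul (by linarith)]
    calc Real.log ((s+1)/(s-1)) ≤ ((s+1)/(s-1) - 1) / Real.sqrt ((s+1)/(s-1)) := this
      _ = 2 / Real.sqrt ((κ-1)/n) := by
          rw [hxm, hsqx, hsqprod]
          have h1 : (0:ℝ) < Real.sqrt (s-1) := Real.sqrt_pos.2 (by linarith)
          have h2 : (0:ℝ) < Real.sqrt (s+1) := Real.sqrt_pos.2 (by linarith)
          have h3 : Real.sqrt (s-1) * Real.sqrt (s-1) = s - 1 :=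
            Real.mul_self_sqrt (by linarith)
          field_simp
          nlinarith
  -- final numeric inequality
  have hfin : (1 / (2 * Real.sqrt 14)) * Real.sqrt (κ / n) + 1 / 4
      ≤ Real.sqrt ((κ-1)/n) / 2 := by
    have hk0 : (0:ℝ) ≤ κ := by linarith
    have h14 : Real.sqrt (κ / n) / Real.sqrt 14 = Real.sqrt (κ / (14 * n)) := by
      rw [← Real.sqrt_div (div_nonneg hk0 hn0.le),
        show κ / (n:ℝ) / 14 = κ / (14 * n) by ring]
    set w : ℝ := Real.sqrt (κ / (14 * n)) with hw
    clear_value w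
    have hw0 : 0 ≤ w := hw ▸ Real.sqrt_nonneg _
    have hw2 : w ^ 2 = κ / (14 * n) := hw ▸ Real.sq_sqrt (div_nonneg (by linarith) (by positivity))
    have hwhalf : 1/2 ≤ w := by
      have : (1/4 : ℝ) ≤ κ / (14 * n) := by
        rw [le_div_iff₀ (by positivity)]; nlinarith
      calc (1/2:ℝ) = Real.sqrt (1/4) := by
              rw [show (1/4:ℝ) = (1/2)^2 by norm_num, Real.sqrt_sq]; norm_num
        _ ≤ w := hw ▸ Real.sqrt_le_sqrt this
    have hmain : w + 1/2 ≤ Real.sqrt ((κ-1)/n) := by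
      have hle : (w + 1/2)^2 ≤ (κ-1)/n := by
        have hinv : (1:ℝ)/n ≤ 1/2 := by
          rw [div_le_div_iff₀ hn0 (by norm_num)]; linarith
        have hnne : (n:ℝ) ≠ 0 := hn0.ne'
        have hA1 : (κ-1)/n = 14 * w^2 - 1/n := by
          rw [hw2]; field_simp
        rw [hA1]
        nlinarith [sq_nonneg (w - 1/2)]
      calc w + 1/2 = Real.sqrt ((w + 1/2)^2) := by
              rw [Real.sqrt_sq (by linarith)]
        _ ≤ _ := Real.sqrt_le_sqrt hle
    have hs14 : (0:ℝ) < Real.sqrt 14 := Real.sqrt_pos.2 (by norm_num)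
    have : (1 / (2 * Real.sqrt 14)) * Real.sqrt (κ / n) = w / 2 := by
      rw [← h14]; field_simp
    rw [this]; linarith
  -- combine
  have hsqpos : 0 < Real.sqrt ((κ-1)/n) := Real.sqrt_pos.2 (div_pos (by linarith) hn0)
  have h2pos : (0:ℝ) < 2 / Real.sqrt ((κ-1)/n) := by positivity
  calc (1 / (2 * Real.sqrt 14)) * Real.sqrt (κ / n) + 1 / 4
      ≤ Real.sqrt ((κ-1)/n) / 2 := hfin
    _ = 1 / (2 / Real.sqrt ((κ-1)/n)) := (one_div_div 2 _).symm
    _ ≤ 1 / Real.log (1 / q1) := by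
        apply one_div_le_one_div_of_le hlogpos hkey
end

section
/- Let κ > 1 be real, n ≥ 2 an integer, and q1 = ((((κ−1)/n)+1)^{1/2} − 1)/((((κ−1)/n)+1)^{1/2} + 1). If (κ−1)/n ≤ 1, then 1/q1 ≤ 1 + (2 + 2√2)·n/(κ−1); consequently log(1/q1) ≤ log(1 + (2 + 2√2)·n/(κ−1)). -/
/-- If `(κ−1)/n ≤ 1` then `1/q1 ≤ 1 + (2 + 2√2) n/(κ−1)`, and consequently
`log(1/q1) ≤ log(1 + (2 + 2√2) n/(κ−1))`, where
`q1 = (√((κ−1)/n + 1) − 1)/(√((κ−1)/n + 1) + 1)`. -/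
theorem stmt2 (κ : ℝ) (hκ : 1 < κ) (n : ℕ) (hn : 2 ≤ n)
    (q1 : ℝ)
    (hq1 : q1 = (Real.sqrt ((κ - 1) / n + 1) - 1) / (Real.sqrt ((κ - 1) / n + 1) + 1))
    (h : (κ - 1) / n ≤ 1) :
    1 / q1 ≤ 1 + (2 + 2 * Real.sqrt 2) * n / (κ - 1) ∧
      Real.log (1 / q1) ≤ Real.log (1 + (2 + 2 * Real.sqrt 2) * n / (κ - 1)) := by
  have hn' : (0:ℝ) < n := by positivity
  set t : ℝ := (κ - 1) / n with ht
  have ht0 : 0 < t := div_pos (by linarith) hn'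
  set s : ℝ := Real.sqrt (t + 1) with hs
  have hs2 : s ^ 2 = t + 1 := Real.sq_sqrt (by linarith)
  have hsnn : 0 ≤ s := Real.sqrt_nonneg _
  have hs1 : 1 < s := by nlinarith
  have hsle : s ≤ Real.sqrt 2 := by
    rw [hs]; exact Real.sqrt_le_sqrt (by linarith)
  have h2ge : (1:ℝ) ≤ Real.sqrt 2 := le_trans hs1.le hsle
  have hq : 1 / q1 = (s + 1) / (s - 1) := by
    rw [hq1, one_div_div]
  have hrhs : 1 + (2 + 2 * Real.sqrt 2) * n / (κ - 1) = 1 + (2 + 2 * Real.sqrt 2) / t := by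
    rw [ht]; field_simp
  have key : (s + 1) / (s - 1) ≤ 1 + (2 + 2 * Real.sqrt 2) / t := by
    rw [show (1:ℝ) + (2 + 2 * Real.sqrt 2) / t = (t + (2 + 2 * Real.sqrt 2)) / t by field_simp,
      div_le_div_iff₀ (by linarith) ht0]
    nlinarith [mul_nonneg (sub_nonneg.mpr hs1.le) (sub_nonneg.mpr hsle)]
  have main : 1 / q1 ≤ 1 + (2 + 2 * Real.sqrt 2) * n / (κ - 1) := by
    rw [hq, hrhs]; exact key
  refine ⟨main, Real.log_le_log ?_ main⟩
  rw [hq]; exact div_pos (by linarith) (by linarith)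
end

section
/- Let n ≥ 2 be an integer, κ > 0 real, and q1 = (√κ − n^{1/4})/(√κ + n^{1/4}). If κ ≥ (9/4)·√n, then 1/log(1/q1) ≥ (1/12)·n^{−1/4}·√κ + 1/8. -/
/-- If `κ ≥ (9/4)√n` then `1/log(1/q1) ≥ (1/12) n^{−1/4} √κ + 1/8`, where
`q1 = (√κ − n^{1/4})/(√κ + n^{1/4})`. -/
theorem stmt5 (n : ℕ) (hn : 2 ≤ n) (κ : ℝ) (hκ : 0 < κ)
    (q1 : ℝ)
    (hq1 : q1 = (Real.sqrt κ - (n : ℝ) ^ ((1 : ℝ) / 4)) / (Real.sqrt κ + (n : ℝ) ^ ((1 : ℝ) / 4)))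
    (h : (9 / 4 : ℝ) * Real.sqrt n ≤ κ) :
    1 / Real.log (1 / q1) ≥ (1 / 12) * (n : ℝ) ^ (-(1 : ℝ) / 4) * Real.sqrt κ + 1 / 8 := by
  have hn0 : (0:ℝ) < n := by positivity
  set a : ℝ := (n : ℝ) ^ ((1 : ℝ) / 4) with ha
  have ha0 : 0 < a := Real.rpow_pos_of_pos hn0 _
  have hsq : a * a = Real.sqrt n := by
    rw [ha, ← Real.rpow_add hn0, Real.sqrt_eq_rpow]
    norm_num
  have hs : (3/2) * a ≤ Real.sqrt κ := by
    have h1 : ((3/2) * a)^2 ≤ κ := by nlinarith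
    have := Real.sqrt_le_sqrt h1
    rwa [Real.sqrt_sq (by positivity)] at this
  set s := Real.sqrt κ with hsdef
  have hs0 : 0 < s := Real.sqrt_pos.mpr hκ
  have hsa : a < s := lt_of_lt_of_le (by linarith) hs
  have h1q : 1/q1 = (s+a)/(s-a) := by
    rw [hq1, one_div_div]
  have hlogpos : 0 < Real.log (1/q1) := by
    rw [h1q]
    apply Real.log_pos
    rw [lt_div_iff₀ (by linarith)]; linarith
  have hlogle : Real.log (1/q1) ≤ 2*a/(s-a) := by
    rw [h1q]
    calc Real.log ((s+a)/(s-a)) ≤ (s+a)/(s-a) - 1 :=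
          Real.log_le_sub_one_of_pos (div_pos (by linarith) (by linarith))
      _ = 2*a/(s-a) := by
          have hne : s - a ≠ 0 := by intro hc; linarith
          field_simp
          ring
  have hinv : (s-a)/(2*a) ≤ 1/Real.log (1/q1) := by
    rw [show (s-a)/(2*a) = 1/(2*a/(s-a)) by rw [one_div_div]]
    exact one_div_le_one_div_of_le hlogpos hlogle
  have hneg : (n : ℝ) ^ (-(1 : ℝ) / 4) = a⁻¹ := by
    rw [neg_div, Real.rpow_neg hn0.le, ha]
  rw [ge_iff_le, hneg]
  have heq : (1/12) * a⁻¹ * s + 1/8 = (2*s + 3*a)/(24*a) := by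
    field_simp; ring
  rw [heq]
  refine le_trans ?_ hinv
  rw [div_le_div_iff₀ (by positivity) (by positivity)]
  nlinarith
end

section
/- Let q1 = ((((κ−1)/n)+1)^{1/2} − 1)/((((κ−1)/n)+1)^{1/2} + 1) and x* ∈ ℝ^d be the minimizer of F, whose ((i−1)p+j)-th coordinate equals q1^j. Let K_1,…,K_n be nonnegative integers with K = ∑_{i=1}^n K_i satisfying 2K ≤ np. Then for every x ∈ ℝ^d such that, for each i and each j > K_i, the coordinate x_{(i−1)p+j} = 0, it holds that ‖x − x*‖₂² ≥ (‖x*‖₂²/2)·q1^{2K/n}. -/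
open Finset
open scoped RealInnerProductSpace

/-- Case (1) progress bound: if `x` has the support pattern produced by `K_i` queries to
`∇f_i` (i.e. `x_{(i−1)p+j} = 0` for `j > K_i`) and `2K ≤ np`, then
`‖x − x*‖² ≥ (‖x*‖²/2) q1^{2K/n}`. -/
theorem stmt10 (n p : ℕ) (hn : 2 ≤ n) [NeZero p] (hp : 1 ≤ p)
    (L μ κ ξ q1 : ℝ) (hμ : 0 < μ) (hLμ : μ < L) (hκ : κ = L / μ)
    (hξ : ξ = (Real.sqrt ((κ - 1) / n + 1) + 3) / (Real.sqrt ((κ - 1) / n + 1) + 1))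
    (hq1 : q1 = (Real.sqrt ((κ - 1) / n + 1) - 1) / (Real.sqrt ((κ - 1) / n + 1) + 1))
    (F : EuclideanSpace ℝ (Fin n × Fin p) → ℝ)
    (hF : F = fun x => (1 / (n : ℝ)) * ∑ i : Fin n, fComp1 n p L μ ξ i x)
    (xstar : EuclideanSpace ℝ (Fin n × Fin p))
    (hxstar : ∀ (i : Fin n) (j : Fin p), xstar (i, j) = q1 ^ ((j : ℕ) + 1))
    (hmin : ∀ y : EuclideanSpace ℝ (Fin n × Fin p), F xstar ≤ F y)
    (K : Fin n → ℕ) (hK : 2 * ∑ i, K i ≤ n * p) :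
    ∀ x : EuclideanSpace ℝ (Fin n × Fin p),
      (∀ (i : Fin n) (j : Fin p), K i < (j : ℕ) + 1 → x (i, j) = 0) →
      ‖x - xstar‖ ^ 2 ≥ (‖xstar‖ ^ 2 / 2) * q1 ^ ((2 * ((∑ i, K i : ℕ) : ℝ)) / n) := by
  intro x hx
  have hn0 : (0:ℝ) < n := by positivity
  have hκ1 : 1 < κ := by rw [hκ, lt_div_iff₀ hμ]; linarith
  have ht1 : 1 < Real.sqrt ((κ - 1) / n + 1) := by
    have h1 : (1:ℝ) < (κ - 1) / n + 1 := by
      have : 0 < (κ - 1) / (n:ℝ) := div_pos (by linarith) hn0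
      linarith
    calc (1:ℝ) = Real.sqrt 1 := by simp
      _ < _ := Real.sqrt_lt_sqrt (by norm_num) h1
  have hq1pos : 0 < q1 := by rw [hq1]; exact div_pos (by linarith) (by linarith)
  have hq1lt : q1 < 1 := by rw [hq1, div_lt_one (by linarith)]; linarith
  set ρ : ℝ := q1 ^ 2 with hρ
  have hρ0 : 0 < ρ := by positivity
  have hρ1 : ρ < 1 := by nlinarith
  have hρne : ρ ≠ 1 := ne_of_lt hρ1
  have h1ρ : 0 < 1 - ρ := by linarith
  have hnorm : ∀ y : EuclideanSpace ℝ (Fin n × Fin p),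
      ‖y‖ ^ 2 = ∑ a : Fin n × Fin p, (y a) ^ 2 := by
    intro y
    rw [EuclideanSpace.norm_eq, Real.sq_sqrt (by positivity)]
    simp [Real.norm_eq_abs, sq_abs]
  have hgeo : ∀ k : ℕ, k ≤ p →
      ∑ j ∈ Finset.Ico k p, ρ ^ (j + 1) = ρ * ((ρ ^ k - ρ ^ p) / (1 - ρ)) := by
    intro k hk
    rw [← geom_sum_Ico' hρne hk, Finset.mul_sum]
    exact Finset.sum_congr rfl fun j _ => by ring
  set S : ℝ := ∑ j ∈ Finset.range p, ρ ^ (j + 1) with hS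
  have hSform : S = ρ * ((1 - ρ ^ p) / (1 - ρ)) := by
    rw [hS, Finset.range_eq_Ico, hgeo 0 (Nat.zero_le p), pow_zero]
  have hsq : ∀ j : ℕ, (q1 ^ (j + 1)) ^ 2 = ρ ^ (j + 1) := by
    intro j; rw [hρ, ← pow_mul, ← pow_mul, Nat.mul_comm]
  have hxstar_norm : ‖xstar‖ ^ 2 = n * S := by
    rw [hnorm, Fintype.sum_prod_type]
    have h1 : ∀ i : Fin n, ∑ j : Fin p, (xstar (i, j)) ^ 2 = S := by
      intro i
      rw [hS, ← Fin.sum_univ_eq_sum_range (fun j => ρ ^ (j + 1)) p]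
      exact Finset.sum_congr rfl fun j _ => by rw [hxstar, hsq]
    rw [Finset.sum_congr rfl fun i _ => h1 i]
    simp [Finset.sum_const, Finset.card_univ, mul_comm]
  set k' : Fin n → ℕ := fun i => min (K i) p with hk'
  have hlow : ∑ i : Fin n, ∑ j ∈ Finset.Ico (k' i) p, ρ ^ (j + 1) ≤ ‖x - xstar‖ ^ 2 := by
    rw [hnorm, Fintype.sum_prod_type]
    apply Finset.sum_le_sum
    intro i _
    have hfil : Finset.Ico (k' i) p
        = (Finset.range p).filter (fun j => k' i ≤ j) := by
      ext j
      simp only [Finset.mem_Ico, Finset.mem_filter, Finset.mem_range]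
      tauto
    rw [hfil, Finset.sum_filter,
      ← Fin.sum_univ_eq_sum_range (fun j => if k' i ≤ j then ρ ^ (j + 1) else 0) p]
    apply Finset.sum_le_sum
    intro j _
    by_cases hc : k' i ≤ (j : ℕ)
    · have hKij : K i < (j : ℕ) + 1 := by
        have hj := j.isLt
        simp only [hk'] at hc
        omega
      have hx0 : x (i, j) = 0 := hx i j hKij
      have hsub : (x - xstar) (i, j) = x (i, j) - xstar (i, j) := rfl
      rw [if_pos hc, hsub, hx0, hxstar, zero_sub, neg_sq, hsq]
    · rw [if_neg hc]
      positivity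
  set Ks : ℕ := ∑ i, K i with hKs
  set E : ℝ := ρ ^ ((Ks : ℝ) / n) with hEdef
  have hE : q1 ^ ((2 * (Ks : ℝ)) / n) = E := by
    rw [hEdef, hρ, ← Real.rpow_natCast q1 2, ← Real.rpow_mul hq1pos.le]
    congr 1
    push_cast
    ring
  have hamgm : (n : ℝ) * E ≤ ∑ i : Fin n, ρ ^ (K i) := by
    have h := Real.geom_mean_le_arith_mean_weighted Finset.univ
      (fun _ : Fin n => 1 / (n : ℝ)) (fun i => ρ ^ (K i))
      (fun i _ => by positivity)
      (by rw [Finset.sum_const, Finset.card_univ, Fintype.card_fin, nsmul_eq_mul]; field_simp)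
      (fun i _ => by positivity)
    have hprod : ∏ i : Fin n, (ρ ^ (K i) : ℝ) ^ ((1 : ℝ) / n) = E := by
      have h2 : ∀ i : Fin n, (ρ ^ (K i) : ℝ) ^ ((1 : ℝ) / n)
          = ρ ^ ((K i : ℝ) * (1 / n)) := by
        intro i
        rw [Real.rpow_mul hρ0.le, Real.rpow_natCast]
      rw [Finset.prod_congr rfl fun i _ => h2 i, ← Real.rpow_sum_of_pos hρ0, hEdef]
      congr 1
      rw [hKs]
      push_cast
      rw [Finset.sum_div]
      exact Finset.sum_congr rfl fun i _ => by ring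
    rw [hprod, ← Finset.mul_sum] at h
    calc (n : ℝ) * E ≤ (n : ℝ) * ((1 / (n : ℝ)) * ∑ i : Fin n, ρ ^ (K i)) :=
          mul_le_mul_of_nonneg_left h hn0.le
      _ = ∑ i : Fin n, ρ ^ (K i) := by field_simp
  have hAmin : (n : ℝ) * E ≤ ∑ i : Fin n, ρ ^ (k' i) :=
    hamgm.trans (Finset.sum_le_sum fun i _ =>
      pow_le_pow_of_le_one hρ0.le hρ1.le (min_le_left _ _))
  set u : ℝ := ρ ^ ((p : ℝ) / 2) with hu
  have hu0 : 0 < u := Real.rpow_pos_of_pos hρ0 _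
  have huP : u ^ 2 = ρ ^ p := by
    rw [hu, ← Real.rpow_natCast (ρ ^ ((p : ℝ) / 2)) 2, ← Real.rpow_mul hρ0.le,
      show ((p : ℝ) / 2) * ((2 : ℕ) : ℝ) = ((p : ℕ) : ℝ) by push_cast; ring,
      Real.rpow_natCast]
  have hEu : u ≤ E := by
    apply Real.rpow_le_rpow_of_exponent_ge hρ0 hρ1.le
    rw [div_le_div_iff₀ hn0 two_pos]
    have hcast : ((2 * Ks : ℕ) : ℝ) ≤ ((n * p : ℕ) : ℝ) := by exact_mod_cast hK
    push_cast at hcast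
    linarith
  have hsum_eq : ∑ i : Fin n, ∑ j ∈ Finset.Ico (k' i) p, ρ ^ (j + 1)
      = ρ / (1 - ρ) * ((∑ i : Fin n, ρ ^ (k' i)) - n * ρ ^ p) := by
    rw [Finset.sum_congr rfl fun i _ => hgeo (k' i) (min_le_right _ _)]
    have h2 : ∀ i : Fin n, ρ * ((ρ ^ (k' i) - ρ ^ p) / (1 - ρ))
        = ρ / (1 - ρ) * ρ ^ (k' i) - ρ / (1 - ρ) * ρ ^ p := fun i => by
      field_simp
    rw [Finset.sum_congr rfl fun i _ => h2 i, Finset.sum_sub_distrib, ← Finset.mul_sum,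
      Finset.sum_const, Finset.card_univ, Fintype.card_fin, nsmul_eq_mul]
    ring
  have hkey : (n : ℝ) * (1 - ρ ^ p) / 2 * E ≤ (∑ i : Fin n, ρ ^ (k' i)) - n * ρ ^ p := by
    rw [← huP]
    nlinarith [mul_nonneg hn0.le (mul_nonneg (sub_nonneg.2 hEu)
        (by positivity : (0:ℝ) ≤ 1 + u ^ 2)),
      mul_nonneg hn0.le (mul_nonneg hu0.le (sq_nonneg (1 - u)))]
  rw [ge_iff_le]
  calc (‖xstar‖ ^ 2 / 2) * q1 ^ ((2 * (Ks : ℝ)) / n)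
      = ρ / (1 - ρ) * ((n : ℝ) * (1 - ρ ^ p) / 2 * E) := by
        rw [hxstar_norm, hE, hSform]; ring
    _ ≤ ρ / (1 - ρ) * ((∑ i : Fin n, ρ ^ (k' i)) - n * ρ ^ p) :=
        mul_le_mul_of_nonneg_left hkey (by positivity)
    _ = ∑ i : Fin n, ∑ j ∈ Finset.Ico (k' i) p, ρ ^ (j + 1) := hsum_eq.symm
    _ ≤ ‖x - xstar‖ ^ 2 := hlow
end

section
/- Let 0 < q < 1, let n ≥ 1 and p ≥ 1 be integers, and let K_1,…,K_n be nonnegative integers with K = ∑_{i=1}^n K_i satisfying 2K ≤ np. Then (∑_{i=1}^n (q^{2K_i} − q^{2p})) / (n(1 − q^{2p})) ≥ q^{2K/n} / (1 + q^p) ≥ (1/2)·q^{2K/n}. -/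
open Finset

/-- For `0 < q < 1` and nonnegative integers `K_1, …, K_n` with `2K ≤ np` where `K = ∑ K_i`:
`(∑ (q^{2K_i} − q^{2p})) / (n(1 − q^{2p})) ≥ q^{2K/n}/(1 + q^p) ≥ (1/2) q^{2K/n}`. -/
theorem stmt13 (q : ℝ) (hq0 : 0 < q) (hq1 : q < 1)
    (n p : ℕ) (hn : 1 ≤ n) (hp : 1 ≤ p)
    (K : Fin n → ℕ) (hK : 2 * ∑ i, K i ≤ n * p) :
    (∑ i, (q ^ (2 * K i) - q ^ (2 * p))) / (n * (1 - q ^ (2 * p)))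
        ≥ q ^ ((2 * ((∑ i, K i : ℕ) : ℝ)) / n) / (1 + q ^ p) ∧
      q ^ ((2 * ((∑ i, K i : ℕ) : ℝ)) / n) / (1 + q ^ p)
        ≥ (1 / 2) * q ^ ((2 * ((∑ i, K i : ℕ) : ℝ)) / n) := by
  have hn0 : (0:ℝ) < n := by exact_mod_cast hn
  have hqp1 : q ^ p < 1 := pow_lt_one₀ hq0.le hq1 (by omega)
  have hqpp : 0 < q ^ p := pow_pos hq0 p
  have hq2p1 : q ^ (2*p) < 1 := pow_lt_one₀ hq0.le hq1 (by omega)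
  have hD : 0 < 1 - q ^ (2*p) := by linarith
  set t : ℝ := 2 * ((∑ i, K i : ℕ) : ℝ) / n with htdef
  have ht0 : 0 ≤ t := by positivity
  have htp : t ≤ p := by
    rw [htdef, div_le_iff₀ hn0]
    have : (2 * ∑ i, K i : ℝ) ≤ (n : ℝ) * p := by exact_mod_cast hK
    push_cast at this ⊢
    linarith
  have hqt : 0 < q ^ t := Real.rpow_pos_of_pos hq0 t
  -- q^p ≤ q^t
  have hpt : q ^ p ≤ q ^ t := by
    have := Real.rpow_le_rpow_of_exponent_ge hq0 hq1.le htp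
    rwa [Real.rpow_natCast] at this
  -- AM-GM : n * q^t ≤ ∑ q^(2 K i)
  have hAM : (n:ℝ) * q ^ t ≤ ∑ i, q ^ (2 * K i) := by
    have h := Real.geom_mean_le_arith_mean_weighted univ (fun _ : Fin n => 1/(n:ℝ))
      (fun i => q ^ (2 * K i)) (fun i _ => by positivity)
      (by simp [Finset.card_univ]; field_simp) (fun i _ => by positivity)
    have hprod : (∏ i : Fin n, (q ^ (2 * K i)) ^ (1/(n:ℝ))) = q ^ t := by
      have : ∀ i : Fin n, (q ^ (2 * K i)) ^ (1/(n:ℝ)) = q ^ ((2 * K i : ℕ) / (n:ℝ)) := by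
        intro i
        rw [← Real.rpow_natCast q (2 * K i), ← Real.rpow_mul hq0.le]
        ring_nf
      simp_rw [this]
      rw [← Real.rpow_sum_of_pos hq0]
      congr 1
      rw [← Finset.sum_div, htdef]
      congr 1
      push_cast
      rw [Finset.mul_sum]
    rw [hprod] at h
    have hsum : (∑ i : Fin n, (1/(n:ℝ)) * q ^ (2 * K i)) = (1/(n:ℝ)) * ∑ i, q ^ (2 * K i) := by
      rw [Finset.mul_sum]
    rw [hsum] at h
    rw [mul_comm]
    calc q ^ t * (n:ℝ) ≤ (1/(n:ℝ)) * (∑ i, q ^ (2 * K i)) * n := by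
          exact mul_le_mul_of_nonneg_right h hn0.le
      _ = ∑ i, q ^ (2 * K i) := by field_simp
  have h1p : 0 < 1 + q ^ p := by linarith
  constructor
  · rw [ge_iff_le, div_le_div_iff₀ h1p (by positivity)]
    rw [Finset.sum_sub_distrib, Finset.sum_const, Finset.card_univ, Fintype.card_fin,
      nsmul_eq_mul]
    have h2p : q ^ (2*p) = q ^ p * q ^ p := by rw [two_mul, pow_add]
    nlinarith [mul_le_mul_of_nonneg_right hAM (by positivity : (0:ℝ) ≤ 1 + q ^ p),
      mul_le_mul_of_nonneg_left (mul_le_mul_of_nonneg_right hpt hqpp.le) hn0.le,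
      mul_le_mul_of_nonneg_left
        (mul_le_mul_of_nonneg_right (mul_le_mul_of_nonneg_right hpt hqpp.le) hqpp.le) hn0.le,
      mul_pos hn0 hqt]
  · rw [ge_iff_le, le_div_iff₀ h1p]
    nlinarith [hqt, hqpp]
end
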